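/- arXiv:1310.5080 — 5 statements merged into one kernel-verified Lean document; each statement's English description precedes it below -/
import Mathlib

section
/- Let γ : ℝ → M be a negative gradient flow line of a smooth function F (i.e. γ'(s) = −∇F(γ(s))) contained in a region where |F(x)| ≤ C · ‖∇F(x)‖² holds for some C > 0 and where F ∘ γ ≥ 0. Then F(γ(s)) ≤ F(γ(s₀)) · e^{−(s−s₀)/C} for all s ≥ s₀, i.e. the value of F along the flow line decays exponentially. -/
open Real

/-- **Exponential decay of the action along a gradient flow line.**
If `γ` is a negative gradient flow line of `F` along which `F ≥ 0` and the
action-energy estimate `|F x| ≤ C ‖∇F x‖²` holds, then `F ∘ γ` decays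
exponentially: `F (γ s) ≤ F (γ s₀) * exp (-(s - s₀)/C)` for `s ≥ s₀`. -/
theorem exp_decay_along_gradient_flow
    {E : Type*} [NormedAddCommGroup E] [InnerProductSpace ℝ E] [CompleteSpace E]
    (F : E → ℝ) (hF : ContDiff ℝ (⊤ : ℕ∞) F)
    (γ : ℝ → E) (hγ : ∀ s : ℝ, HasDerivAt γ (-(gradient F (γ s))) s)
    (C : ℝ) (hC : 0 < C) (s₀ : ℝ)
    (hest : ∀ s ≥ s₀, |F (γ s)| ≤ C * ‖gradient F (γ s)‖ ^ 2)
    (hpos : ∀ s ≥ s₀, 0 ≤ F (γ s)) :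
    ∀ s ≥ s₀, F (γ s) ≤ F (γ s₀) * exp (-(s - s₀) / C) := by
  set f : ℝ → ℝ := fun s => F (γ s) with hf
  have hf' : ∀ s : ℝ, HasDerivAt f (-‖gradient F (γ s)‖ ^ 2) s := by
    intro s
    have hGrad : HasGradientAt F (gradient F (γ s)) (γ s) :=
      ((hF.differentiable (by simp)) (γ s)).hasGradientAt
    have := hGrad.hasFDerivAt.comp_hasDerivAt s (hγ s)
    refine this.congr_deriv ?_
    rw [InnerProductSpace.toDual_apply_apply]
    simp [real_inner_smul_right, real_inner_self_eq_norm_sq]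
  set g : ℝ → ℝ := fun s => f s * exp ((s - s₀) / C) with hg
  have hg' : ∀ s ≥ s₀, HasDerivAt g
      ((-‖gradient F (γ s)‖ ^ 2 + f s / C) * exp ((s - s₀) / C)) s := by
    intro s hs
    have h1 : HasDerivAt (fun s => exp ((s - s₀) / C)) (exp ((s - s₀) / C) * (1 / C)) s := by
      have : HasDerivAt (fun s : ℝ => (s - s₀) / C) (1 / C) s := by
        simpa using ((hasDerivAt_id s).sub_const s₀).div_const C
      exact this.exp
    have := (hf' s).mul h1
    refine this.congr_deriv ?_
    ring
  have key : AntitoneOn g (Set.Ici s₀) := by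
    apply antitoneOn_of_deriv_nonpos (convex_Ici s₀)
    · have hγc : Continuous γ := continuous_iff_continuousAt.mpr fun s => (hγ s).continuousAt
      exact Continuous.continuousOn
        ((hF.continuous.comp hγc).mul (Real.continuous_exp.comp (by continuity)))
    · intro s hs
      rw [interior_Ici] at hs
      exact (hg' s (le_of_lt hs)).differentiableAt.differentiableWithinAt
    · intro s hs
      rw [interior_Ici] at hs
      have hs' : s ≥ s₀ := le_of_lt hs
      rw [(hg' s hs').deriv]
      apply mul_nonpos_of_nonpos_of_nonneg _ (exp_pos _).le
      have h2 := hest s hs'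
      rw [abs_of_nonneg (hpos s hs')] at h2
      have : f s / C ≤ ‖gradient F (γ s)‖ ^ 2 := by
        rw [div_le_iff₀ hC]; linarith [h2]
      linarith
  intro s hs
  have := key (Set.self_mem_Ici) (Set.mem_Ici.mpr hs) hs
  simp only [hg, hf] at this
  rw [sub_self, zero_div, exp_zero, mul_one] at this
  have hrw : exp (-(s - s₀) / C) = (exp ((s - s₀) / C))⁻¹ := by
    rw [← exp_neg, neg_div]
  rw [hrw]
  calc F (γ s) = F (γ s) * exp ((s - s₀)/C) * (exp ((s - s₀)/C))⁻¹ := by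
        field_simp
    _ ≤ F (γ s₀) * (exp ((s - s₀)/C))⁻¹ := by
        apply mul_le_mul_of_nonneg_right this (by positivity)
end

section
/- Let γ : ℝ → M solve γ'(s) = −∇G_s(γ(s)) with G_s = β(s)h + (1−β(s))F, where β : ℝ → [0,1] is smooth with compact support, β is nondecreasing on (−∞, c] and nonincreasing on [c, ∞) for some c, and suppose γ(s) converges as s → ±∞ to points z^± with F(z^±) = 0 and γ has finite energy. Then the total energy satisfies 0 ≤ ∫_{−∞}^{∞} |γ'(s)|² ds ≤ sup(h−F) − inf(h−F) = ‖h−F‖. -/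
open Filter MeasureTheory Topology

private lemma aux_deriv_nonneg {f : ℝ → ℝ} {c s d : ℝ} (hs : s < c)
    (hmono : MonotoneOn f (Set.Iic c)) (hd : HasDerivAt f d s) : 0 ≤ d := by
  have h1 : Tendsto (slope f s) (𝓝[>] s) (𝓝 d) :=
    (hasDerivAt_iff_tendsto_slope.mp hd).mono_left
      (nhdsWithin_mono s fun t ht => ne_of_gt ht)
  refine ge_of_tendsto h1 ?_
  filter_upwards [Ioo_mem_nhdsGT_of_mem ⟨le_refl s, hs⟩] with t ht
  rw [slope_def_field]
  have h2 := hmono (le_of_lt (lt_trans ht.1 ht.2) : s ≤ c) (le_of_lt ht.2) (le_of_lt ht.1)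
  exact div_nonneg (sub_nonneg.2 h2) (sub_nonneg.2 (le_of_lt ht.1))

private lemma aux_deriv_nonpos {f : ℝ → ℝ} {c s d : ℝ} (hs : c < s)
    (hanti : AntitoneOn f (Set.Ici c)) (hd : HasDerivAt f d s) : d ≤ 0 := by
  have h1 : Tendsto (slope f s) (𝓝[>] s) (𝓝 d) :=
    (hasDerivAt_iff_tendsto_slope.mp hd).mono_left
      (nhdsWithin_mono s fun t ht => ne_of_gt ht)
  refine le_of_tendsto h1 ?_
  filter_upwards [self_mem_nhdsWithin] with t (ht : s < t)
  rw [slope_def_field]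
  have h2 := hanti (le_of_lt hs : c ≤ s) (le_of_lt (lt_trans hs ht)) (le_of_lt ht)
  exact div_nonpos_of_nonpos_of_nonneg (sub_nonpos.2 h2) (sub_nonneg.2 (le_of_lt ht))

/-- **Total energy bound for interpolating gradient trajectories.**
For a finite-energy solution of `γ' = -∇G_s(γ)` with `G_s = β s · h + (1 - β s) · F`,
`β` compactly supported and unimodal, whose asymptotic limits lie in `F⁻¹(0)`,
the total energy is between `0` and the oscillation `‖h - F‖ = sup(h-F) - inf(h-F)`. -/
theorem total_energy_bound
    {E : Type*} [NormedAddCommGroup E] [InnerProductSpace ℝ E] [CompleteSpace E]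
    (F h : E → ℝ) (hF : ContDiff ℝ (⊤ : ℕ∞) F) (hh : ContDiff ℝ (⊤ : ℕ∞) h)
    (hbdd_above : BddAbove (Set.range fun x => h x - F x))
    (hbdd_below : BddBelow (Set.range fun x => h x - F x))
    (β : ℝ → ℝ) (hβ : ContDiff ℝ (⊤ : ℕ∞) β) (hβ01 : ∀ s, β s ∈ Set.Icc (0:ℝ) 1)
    (hβsupp : HasCompactSupport β) (c : ℝ)
    (hβmono : MonotoneOn β (Set.Iic c)) (hβanti : AntitoneOn β (Set.Ici c))
    (G : ℝ → E → ℝ) (hG : ∀ s x, G s x = β s * h x + (1 - β s) * F x)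
    (γ : ℝ → E) (hγ : ∀ s : ℝ, HasDerivAt γ (-(gradient (G s) (γ s))) s)
    (zplus zminus : E)
    (hlimp : Tendsto γ atTop (nhds zplus)) (hlimm : Tendsto γ atBot (nhds zminus))
    (hFz : F zplus = 0 ∧ F zminus = 0)
    (hfin : Integrable (fun s => ‖gradient (G s) (γ s)‖ ^ 2)) :
    0 ≤ ∫ s : ℝ, ‖gradient (G s) (γ s)‖ ^ 2 ∧
      ∫ s : ℝ, ‖gradient (G s) (γ s)‖ ^ 2 ≤
        sSup (Set.range fun x => h x - F x) - sInf (Set.range fun x => h x - F x) := by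
  obtain ⟨hFzp, hFzm⟩ := hFz
  set M := sSup (Set.range fun x => h x - F x) with hM
  set m := sInf (Set.range fun x => h x - F x) with hm
  have huM : ∀ x : E, h x - F x ≤ M := fun x => le_csSup hbdd_above ⟨x, rfl⟩
  have hum : ∀ x : E, m ≤ h x - F x := fun x => csInf_le hbdd_below ⟨x, rfl⟩
  have hMm : m ≤ M := (hum zplus).trans (huM zplus)
  -- gradient of the interpolated functional
  have hgradH : ∀ x : E, HasFDerivAt h (InnerProductSpace.toDual ℝ E (gradient h x)) x :=
    fun x => hasGradientAt_iff_hasFDerivAt.mp (hh.differentiable (by simp) x).hasGradientAt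
  have hgradF : ∀ x : E, HasFDerivAt F (InnerProductSpace.toDual ℝ E (gradient F x)) x :=
    fun x => hasGradientAt_iff_hasFDerivAt.mp (hF.differentiable (by simp) x).hasGradientAt
  have hgrad : ∀ s : ℝ,
      gradient (G s) (γ s) = β s • gradient h (γ s) + (1 - β s) • gradient F (γ s) := by
    intro s
    refine HasGradientAt.gradient ?_
    have hfun : G s = fun x => β s * h x + (1 - β s) * F x := funext (hG s)
    rw [hfun, hasGradientAt_iff_hasFDerivAt]
    have := ((hgradH (γ s)).const_mul (β s)).add ((hgradF (γ s)).const_mul (1 - β s))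
    refine this.congr_fderiv ?_
    rw [map_add, map_smulₛₗ, map_smulₛₗ]; simp
  have hγcont : Continuous γ := by
    rw [continuous_iff_continuousAt]; exact fun s => (hγ s).continuousAt
  -- derivative of the action along the trajectory
  have hφd : ∀ s : ℝ, HasDerivAt (fun t => β t * (h (γ t) - F (γ t)) + F (γ t))
      (deriv β s * (h (γ s) - F (γ s)) - ‖gradient (G s) (γ s)‖ ^ 2) s := by
    intro s
    have hβd : HasDerivAt β (deriv β s) s := (hβ.differentiable (by simp) s).hasDerivAt
    have hhd : HasDerivAt (fun t => h (γ t))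
        (inner ℝ (gradient h (γ s)) (-(gradient (G s) (γ s))) : ℝ) s := by
      have := (hgradH (γ s)).comp_hasDerivAt s (hγ s)
      exact this
    have hFd : HasDerivAt (fun t => F (γ t))
        (inner ℝ (gradient F (γ s)) (-(gradient (G s) (γ s))) : ℝ) s := by
      have := (hgradF (γ s)).comp_hasDerivAt s (hγ s)
      exact this
    have hd := (hβd.mul (hhd.sub hFd)).add hFd
    refine hd.congr_deriv ?_
    rw [Pi.sub_apply]
    have e2 : β s * (inner ℝ (gradient h (γ s)) (-(gradient (G s) (γ s))) : ℝ)
        + (1 - β s) * (inner ℝ (gradient F (γ s)) (-(gradient (G s) (γ s))) : ℝ)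
        = (inner ℝ (gradient (G s) (γ s)) (-(gradient (G s) (γ s))) : ℝ) := by
      rw [hgrad s]
      simp [inner_add_left, real_inner_smul_left]
    have e1 : (inner ℝ (gradient (G s) (γ s)) (-(gradient (G s) (γ s))) : ℝ)
        = -‖gradient (G s) (γ s)‖ ^ 2 := by
      rw [inner_neg_right, real_inner_self_eq_norm_sq]
    linear_combination e2 + e1
  -- integrability of the source term
  have hψcont : Continuous (fun s => deriv β s * (h (γ s) - F (γ s))) :=
    (hβ.continuous_deriv (by simp)).mul ((hh.continuous.comp hγcont).sub (hF.continuous.comp hγcont))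
  have hψsupp : HasCompactSupport (fun s => deriv β s * (h (γ s) - F (γ s))) :=
    (hβsupp.deriv).mul_right
  have hψint : Integrable (fun s => deriv β s * (h (γ s) - F (γ s))) :=
    hψcont.integrable_of_hasCompactSupport hψsupp
  -- β tends to 0 at ±∞
  have hβz := hasCompactSupport_iff_eventuallyEq.mp hβsupp
  rw [Filter.coclosedCompact_eq_cocompact] at hβz
  have hβtop : Tendsto β atTop (𝓝 0) := (hβz.filter_mono atTop_le_cocompact).tendsto
  have hβbot : Tendsto β atBot (𝓝 0) := (hβz.filter_mono atBot_le_cocompact).tendsto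
  -- limits of the action
  have hφtop : Tendsto (fun t => β t * (h (γ t) - F (γ t)) + F (γ t)) atTop (𝓝 0) := by
    have h1 : Tendsto (fun s => h (γ s)) atTop (𝓝 (h zplus)) :=
      (hh.continuous.tendsto zplus).comp hlimp
    have h2 : Tendsto (fun s => F (γ s)) atTop (𝓝 (F zplus)) :=
      (hF.continuous.tendsto zplus).comp hlimp
    have := (hβtop.mul (h1.sub h2)).add h2
    simpa [hFzp] using this
  have hφbot : Tendsto (fun t => β t * (h (γ t) - F (γ t)) + F (γ t)) atBot (𝓝 0) := by
    have h1 : Tendsto (fun s => h (γ s)) atBot (𝓝 (h zminus)) :=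
      (hh.continuous.tendsto zminus).comp hlimm
    have h2 : Tendsto (fun s => F (γ s)) atBot (𝓝 (F zminus)) :=
      (hF.continuous.tendsto zminus).comp hlimm
    have := (hβbot.mul (h1.sub h2)).add h2
    simpa [hFzm] using this
  -- energy identity
  have hkey : ∫ s : ℝ, ‖gradient (G s) (γ s)‖ ^ 2
      = ∫ s : ℝ, deriv β s * (h (γ s) - F (γ s)) := by
    have hsub : Integrable
        (fun s => deriv β s * (h (γ s) - F (γ s)) - ‖gradient (G s) (γ s)‖ ^ 2) :=
      hψint.sub hfin
    have h0 : ∫ s : ℝ, (deriv β s * (h (γ s) - F (γ s)) - ‖gradient (G s) (γ s)‖ ^ 2)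
        = 0 - 0 := integral_of_hasDerivAt_of_tendsto hφd hsub hφbot hφtop
    rw [integral_sub hψint hfin] at h0
    linarith
  -- bounds for the source integral
  have hβC1 : ContDiff ℝ 1 β := hβ.of_le (by simp)
  have hI1 : ∫ s in Set.Iic c, deriv β s = β c :=
    HasCompactSupport.integral_Iic_deriv_eq hβC1 hβsupp c
  have hI2 : ∫ s in Set.Ioi c, deriv β s = -β c :=
    HasCompactSupport.integral_Ioi_deriv_eq hβC1 hβsupp c
  have hbint : Integrable (fun s => deriv β s * M) :=
    ((hβ.continuous_deriv (by simp)).mul continuous_const).integrable_of_hasCompactSupport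
      (hβsupp.deriv.mul_right)
  have hbint' : Integrable (fun s => deriv β s * m) :=
    ((hβ.continuous_deriv (by simp)).mul continuous_const).integrable_of_hasCompactSupport
      (hβsupp.deriv.mul_right)
  have hsplit : (∫ s in Set.Iic c, deriv β s * (h (γ s) - F (γ s)))
      + ∫ s in Set.Ioi c, deriv β s * (h (γ s) - F (γ s))
      = ∫ s : ℝ, deriv β s * (h (γ s) - F (γ s)) :=
    intervalIntegral.integral_Iic_add_Ioi hψint.integrableOn hψint.integrableOn
  have hb1 : ∫ s in Set.Iic c, deriv β s * (h (γ s) - F (γ s)) ≤ β c * M := by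
    rw [setIntegral_congr_set Iio_ae_eq_Iic.symm]
    calc ∫ s in Set.Iio c, deriv β s * (h (γ s) - F (γ s))
        ≤ ∫ s in Set.Iio c, deriv β s * M := by
          refine setIntegral_mono_on hψint.integrableOn hbint.integrableOn
            measurableSet_Iio fun s hs => ?_
          exact mul_le_mul_of_nonneg_left (huM (γ s))
            (aux_deriv_nonneg hs hβmono (hβ.differentiable (by simp) s).hasDerivAt)
      _ = (∫ s in Set.Iio c, deriv β s) * M := integral_mul_const _ _
      _ = β c * M := by rw [setIntegral_congr_set Iio_ae_eq_Iic, hI1]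
  have hb2 : ∫ s in Set.Ioi c, deriv β s * (h (γ s) - F (γ s)) ≤ -β c * m := by
    calc ∫ s in Set.Ioi c, deriv β s * (h (γ s) - F (γ s))
        ≤ ∫ s in Set.Ioi c, deriv β s * m := by
          refine setIntegral_mono_on hψint.integrableOn hbint'.integrableOn
            measurableSet_Ioi fun s hs => ?_
          exact mul_le_mul_of_nonpos_left (hum (γ s))
            (aux_deriv_nonpos hs hβanti (hβ.differentiable (by simp) s).hasDerivAt)
      _ = (∫ s in Set.Ioi c, deriv β s) * m := integral_mul_const _ _
      _ = -β c * m := by rw [hI2]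
  obtain ⟨hβc0, hβc1⟩ := hβ01 c
  refine ⟨integral_nonneg fun s => sq_nonneg _, ?_⟩
  rw [hkey]
  nlinarith [hb1, hb2, hsplit, hMm, hβc0, hβc1]
end

section
/- In the same setting, for every s ∈ ℝ one has |F(γ(s))| ≤ ‖h−F‖, i.e. the value of the unperturbed function F along the interpolating gradient trajectory is bounded by the oscillation of h−F. -/
open Filter MeasureTheory

lemma my_deriv_nonneg_of_monotoneOn {β : ℝ → ℝ} {c u : ℝ} (hd : DifferentiableAt ℝ β u)
    (hm : MonotoneOn β (Set.Iic c)) (hu : u ≤ c) : 0 ≤ deriv β u := by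
  have h := hd.hasDerivAt
  rw [hasDerivAt_iff_tendsto_slope] at h
  have h' : Tendsto (slope β u) (nhdsWithin u (Set.Iio u)) (nhds (deriv β u)) :=
    h.mono_left (nhdsWithin_mono _ fun y hy => ne_of_lt hy)
  refine ge_of_tendsto h' ?_
  filter_upwards [self_mem_nhdsWithin] with y (hy : y < u)
  have hβy : β y ≤ β u := hm (le_trans hy.le hu) hu hy.le
  rw [slope_def_field]
  have := div_nonneg (by linarith : (0:ℝ) ≤ β u - β y) (by linarith : (0:ℝ) ≤ u - y)
  rwa [show (β u - β y)/(u - y) = (β y - β u)/(y - u) by rw [← neg_div_neg_eq]; ring_nf] at this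

lemma my_deriv_nonpos_of_antitoneOn {β : ℝ → ℝ} {c u : ℝ} (hd : DifferentiableAt ℝ β u)
    (hm : AntitoneOn β (Set.Ici c)) (hu : c ≤ u) : deriv β u ≤ 0 := by
  have h := hd.hasDerivAt
  rw [hasDerivAt_iff_tendsto_slope] at h
  have h' : Tendsto (slope β u) (nhdsWithin u (Set.Ioi u)) (nhds (deriv β u)) :=
    h.mono_left (nhdsWithin_mono _ fun y hy => (ne_of_lt hy).symm)
  refine le_of_tendsto h' ?_
  filter_upwards [self_mem_nhdsWithin] with y (hy : u < y)
  have hβy : β y ≤ β u := hm hu (le_trans hu hy.le) hy.le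
  rw [slope_def_field]
  exact div_nonpos_of_nonpos_of_nonneg (by linarith) (by linarith)

lemma gradient_combo {E : Type*} [NormedAddCommGroup E] [InnerProductSpace ℝ E] [CompleteSpace E]
    (F h : E → ℝ) (hF : Differentiable ℝ F) (hh : Differentiable ℝ h) (b : ℝ) (x : E) :
    HasGradientAt (fun y => b * h y + (1 - b) * F y)
      (b • gradient h x + (1 - b) • gradient F x) x := by
  have h1 : HasFDerivAt h (InnerProductSpace.toDual ℝ E (gradient h x)) x :=
    (hh x).hasGradientAt.hasFDerivAt
  have h2 : HasFDerivAt F (InnerProductSpace.toDual ℝ E (gradient F x)) x :=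
    (hF x).hasGradientAt.hasFDerivAt
  have key : (InnerProductSpace.toDual ℝ E) (b • gradient h x + (1 - b) • gradient F x)
      = b • (InnerProductSpace.toDual ℝ E (gradient h x))
        + (1 - b) • (InnerProductSpace.toDual ℝ E (gradient F x)) := by
    ext v
    simp [InnerProductSpace.toDual_apply_apply, inner_add_left, real_inner_smul_left]
  rw [hasGradientAt_iff_hasFDerivAt, key]
  exact (h1.const_mul b).add (h2.const_mul (1 - b))

lemma calc_up (S I b e as d : ℝ) (hIS : I ≤ S) (hb0 : 0 ≤ b) (he0 : 0 ≤ e) (he1 : e ≤ 1)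
    (hdI : I ≤ d) (hU : as ≤ e * S + (b - e) * I) : as - b * d ≤ S - I := by
  nlinarith [mul_le_mul_of_nonneg_left hdI hb0, mul_nonneg (by linarith : (0:ℝ) ≤ 1 - e)
    (by linarith : (0:ℝ) ≤ S - I)]

lemma calc_lo (S I b e as d : ℝ) (hIS : I ≤ S) (hb0 : 0 ≤ b) (he0 : 0 ≤ e) (he1 : e ≤ 1)
    (hdS : d ≤ S) (hL : e * I - (e - b) * S ≤ as) : -(S - I) ≤ as - b * d := by
  nlinarith [mul_le_mul_of_nonneg_left hdS hb0, mul_nonneg (by linarith : (0:ℝ) ≤ 1 - e)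
    (by linarith : (0:ℝ) ≤ S - I)]

/-- **Action bound along interpolating trajectories.**
For a finite-energy solution of `γ' = -∇G_s(γ)` with `G_s = β s · h + (1 - β s) · F`,
`β` compactly supported and unimodal, whose asymptotic limits lie in `F⁻¹(0)`,
the total energy is between `0` and the oscillation `‖h - F‖ = sup(h-F) - inf(h-F)`. -/
theorem unperturbed_action_bound_along_trajectory
    {E : Type*} [NormedAddCommGroup E] [InnerProductSpace ℝ E] [CompleteSpace E]
    (F h : E → ℝ) (hF : ContDiff ℝ (⊤ : ℕ∞) F) (hh : ContDiff ℝ (⊤ : ℕ∞) h)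
    (hbdd_above : BddAbove (Set.range fun x => h x - F x))
    (hbdd_below : BddBelow (Set.range fun x => h x - F x))
    (β : ℝ → ℝ) (hβ : ContDiff ℝ (⊤ : ℕ∞) β) (hβ01 : ∀ s, β s ∈ Set.Icc (0:ℝ) 1)
    (hβsupp : HasCompactSupport β) (c : ℝ)
    (hβmono : MonotoneOn β (Set.Iic c)) (hβanti : AntitoneOn β (Set.Ici c))
    (G : ℝ → E → ℝ) (hG : ∀ s x, G s x = β s * h x + (1 - β s) * F x)
    (γ : ℝ → E) (hγ : ∀ s : ℝ, HasDerivAt γ (-(gradient (G s) (γ s))) s)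
    (zplus zminus : E)
    (hlimp : Tendsto γ atTop (nhds zplus)) (hlimm : Tendsto γ atBot (nhds zminus))
    (hFz : F zplus = 0 ∧ F zminus = 0)
    (hfin : Integrable (fun s => ‖gradient (G s) (γ s)‖ ^ 2)) :
    ∀ s : ℝ, |F (γ s)| ≤
        sSup (Set.range fun x => h x - F x) - sInf (Set.range fun x => h x - F x) := by
  intro s
  set S := sSup (Set.range fun x => h x - F x) with hSdef
  set I := sInf (Set.range fun x => h x - F x) with hIdef
  obtain ⟨hFzp, hFzm⟩ := hFz
  have hFd : Differentiable ℝ F := hF.differentiable (by simp)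
  have hhd : Differentiable ℝ h := hh.differentiable (by simp)
  have hβd : Differentiable ℝ β := hβ.differentiable (by simp)
  have hγcont : Continuous γ := by
    have : Differentiable ℝ γ := fun u => (hγ u).differentiableAt
    exact this.continuous
  -- bounds on h - F along anything
  have hle : ∀ x : E, h x - F x ≤ S := fun x => le_csSup hbdd_above ⟨x, rfl⟩
  have hge : ∀ x : E, I ≤ h x - F x := fun x => csInf_le hbdd_below ⟨x, rfl⟩
  have hIS : I ≤ S := le_trans (hge (γ s)) (hle (γ s))
  -- gradient formula for G
  have hgradG : ∀ u x, gradient (G u) x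
      = β u • gradient h x + (1 - β u) • gradient F x := by
    intro u x
    have hfun : G u = fun y => β u * h y + (1 - β u) * F y := funext (hG u)
    rw [hfun]
    exact (gradient_combo F h hFd hhd (β u) x).gradient
  -- functions
  set ψ : ℝ → ℝ := fun u => deriv β u * (h (γ u) - F (γ u)) with hψdef
  set a : ℝ → ℝ := fun u => β u * h (γ u) + (1 - β u) * F (γ u) with hadef
  have hψcont : Continuous ψ := by
    exact ((hβ.continuous_deriv (by simp)).mul
      (((hh.continuous).comp hγcont).sub ((hF.continuous).comp hγcont)))
  have hacont : Continuous a := by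
    exact ((hβ.continuous.mul ((hh.continuous).comp hγcont)).add
      (((continuous_const.sub hβ.continuous)).mul ((hF.continuous).comp hγcont)))
  -- derivative of a
  have haderiv : ∀ u, HasDerivAt a (ψ u - ‖gradient (G u) (γ u)‖ ^ 2) u := by
    intro u
    have hβu : HasDerivAt β (deriv β u) u := (hβd u).hasDerivAt
    have hv := hγ u
    have hhγ : HasDerivAt (fun t => h (γ t))
        ((inner ℝ (gradient h (γ u)) (-(gradient (G u) (γ u))) : ℝ)) u := by
      have hg : HasFDerivAt h (InnerProductSpace.toDual ℝ E (gradient h (γ u))) (γ u) :=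
        (hhd (γ u)).hasGradientAt.hasFDerivAt
      have := hg.comp_hasDerivAt u hv
      rw [InnerProductSpace.toDual_apply_apply] at this
      exact this
    have hFγ : HasDerivAt (fun t => F (γ t))
        ((inner ℝ (gradient F (γ u)) (-(gradient (G u) (γ u))) : ℝ)) u := by
      have hg : HasFDerivAt F (InnerProductSpace.toDual ℝ E (gradient F (γ u))) (γ u) :=
        (hFd (γ u)).hasGradientAt.hasFDerivAt
      have := hg.comp_hasDerivAt u hv
      rw [InnerProductSpace.toDual_apply_apply] at this
      exact this
    have hcomb := (hβu.mul hhγ).add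
      (((hasDerivAt_const u (1 : ℝ)).sub hβu).mul hFγ)
    refine hcomb.congr_deriv (Eq.symm ?_)
    have hginner : ‖gradient (G u) (γ u)‖ ^ 2
        = (inner ℝ (gradient (G u) (γ u)) (gradient (G u) (γ u)) : ℝ) :=
      (real_inner_self_eq_norm_sq _).symm
    rw [hginner]
    nth_rewrite 1 [hgradG u (γ u)]
    rw [inner_add_left, real_inner_smul_left, real_inner_smul_left,
      inner_neg_right, inner_neg_right]
    simp only [hψdef, Pi.sub_apply]
    ring
  -- antiderivative of ψ
  set A : ℝ → ℝ := fun t => ∫ u in (0:ℝ)..t, ψ u with hAdef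
  have hAderiv : ∀ t, HasDerivAt A (ψ t) t := by
    intro t
    exact intervalIntegral.integral_hasDerivAt_right
      (hψcont.intervalIntegrable _ _)
      (hψcont.stronglyMeasurableAtFilter _ _)
      hψcont.continuousAt
  -- φ is antitone
  set φ : ℝ → ℝ := fun t => a t - A t with hφdef
  have hφderiv : ∀ t, HasDerivAt φ (-‖gradient (G t) (γ t)‖ ^ 2) t := by
    intro t
    have := (haderiv t).sub (hAderiv t)
    exact this.congr_deriv (by ring)
  have hφanti : Antitone φ := by
    apply antitone_of_deriv_nonpos
    · exact fun t => (hφderiv t).differentiableAt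
    · intro t
      rw [(hφderiv t).deriv]
      exact neg_nonpos.mpr (by positivity)
  -- key inequality : for t ≤ s', a s' ≤ a t + ∫ t..s' ψ
  have hkey : ∀ t t' : ℝ, t ≤ t' → a t' ≤ a t + ∫ u in t..t', ψ u := by
    intro t t' htt
    have := hφanti htt
    have hsub : A t' - A t = ∫ u in t..t', ψ u := by
      rw [hAdef]
      simpa using intervalIntegral.integral_interval_sub_left
        (hψcont.intervalIntegrable 0 t') (hψcont.intervalIntegrable 0 t)
    simp only [hφdef] at this
    linarith
  -- compact support radius
  obtain ⟨r, hr⟩ := hβsupp.isCompact.isBounded.subset_closedBall 0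
  set R : ℝ := max r |c| + 1 with hRdef
  have hβzero : ∀ u : ℝ, R ≤ |u| → β u = 0 := by
    intro u hu
    apply image_eq_zero_of_notMem_tsupport
    intro hmem
    have h1 : |u| ≤ r := by
      have := hr hmem
      rwa [Metric.mem_closedBall, Real.dist_eq, sub_zero] at this
    have h2 : r ≤ max r |c| := le_max_left _ _
    simp only [hRdef] at hu
    linarith
  have hψzero : ∀ u : ℝ, R ≤ |u| → ψ u = 0 := by
    intro u hu
    have hd0 : deriv β u = 0 := by
      by_contra hne
      have : u ∈ Function.support (deriv β) := hne
      have hmem := support_deriv_subset this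
      have h1 := hr hmem
      rw [Metric.mem_closedBall, Real.dist_eq, sub_zero] at h1
      have h2 : r ≤ max r |c| := le_max_left _ _
      simp only [hRdef] at hu
      linarith
    simp [hψdef, hd0]
  have hcR : |c| < R := by
    have : |c| ≤ max r |c| := le_max_right _ _
    simp only [hRdef]; linarith
  have hcR1 : -R < c ∧ c < R := abs_lt.mp hcR
  -- a equals F∘γ far away
  have haF : ∀ u : ℝ, R ≤ |u| → a u = F (γ u) := by
    intro u hu
    simp [hadef, hβzero u hu]
  -- limits
  have halimm : Tendsto a atBot (nhds 0) := by
    have h1 : Tendsto (fun u => F (γ u)) atBot (nhds 0) := by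
      rw [← hFzm]
      exact (hF.continuous.tendsto zminus).comp hlimm
    apply h1.congr'
    filter_upwards [eventually_le_atBot (-R)] with u hu
    exact (haF u (by rw [abs_of_nonpos (by linarith [hcR1.1] : u ≤ 0)]; linarith)).symm
  have halimp : Tendsto a atTop (nhds 0) := by
    have h1 : Tendsto (fun u => F (γ u)) atTop (nhds 0) := by
      rw [← hFzp]
      exact (hF.continuous.tendsto zplus).comp hlimp
    apply h1.congr'
    filter_upwards [eventually_ge_atTop R] with u hu
    exact (haF u (by rw [abs_of_nonneg (by linarith [hcR1.2] : 0 ≤ u)]; linarith)).symm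
  -- upper bound: a s ≤ ∫ t0..s ψ
  set t0 : ℝ := min s (-R) with ht0def
  have ht0s : t0 ≤ s := min_le_left _ _
  have ht0R : t0 ≤ -R := min_le_right _ _
  have haU : a s ≤ ∫ u in t0..s, ψ u := by
    have hev : ∀ᶠ t in atBot, a s - (∫ u in t0..s, ψ u) ≤ a t := by
      filter_upwards [eventually_le_atBot t0] with t ht
      have h1 := hkey t s (le_trans ht ht0s)
      have hzero : (∫ u in t..t0, ψ u) = 0 := by
        rw [intervalIntegral.integral_congr (g := fun _ => (0:ℝ))]
        · simp
        · intro u hu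
          rw [Set.uIcc_of_le ht] at hu
          have hu0 : u ≤ 0 := by linarith [hu.2, hcR1.1]
          have habs : R ≤ |u| := by rw [abs_of_nonpos hu0]; linarith [hu.2]
          exact hψzero u habs
      have hsplit : (∫ u in t..s, ψ u) = (∫ u in t..t0, ψ u) + ∫ u in t0..s, ψ u :=
        (intervalIntegral.integral_add_adjacent_intervals
          (hψcont.intervalIntegrable _ _) (hψcont.intervalIntegrable _ _)).symm
      rw [hsplit, hzero] at h1
      linarith
    have := ge_of_tendsto halimm hev
    linarith
  -- lower bound: -∫ s..t1 ψ ≤ a s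
  set t1 : ℝ := max s R with ht1def
  have ht1s : s ≤ t1 := le_max_left _ _
  have ht1R : R ≤ t1 := le_max_right _ _
  have haL : -(∫ u in s..t1, ψ u) ≤ a s := by
    have hev : ∀ᶠ t in atTop, a t ≤ a s + ∫ u in s..t1, ψ u := by
      filter_upwards [eventually_ge_atTop t1] with t ht
      have h1 := hkey s t (le_trans ht1s ht)
      have hzero : (∫ u in t1..t, ψ u) = 0 := by
        rw [intervalIntegral.integral_congr (g := fun _ => (0:ℝ))]
        · simp
        · intro u hu
          rw [Set.uIcc_of_le ht] at hu
          have hu0 : 0 ≤ u := by linarith [hu.1, hcR1.2]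
          have habs : R ≤ |u| := by rw [abs_of_nonneg hu0]; linarith [hu.1]
          exact hψzero u habs
      have hsplit : (∫ u in s..t, ψ u) = (∫ u in s..t1, ψ u) + ∫ u in t1..t, ψ u :=
        (intervalIntegral.integral_add_adjacent_intervals
          (hψcont.intervalIntegrable _ _) (hψcont.intervalIntegrable _ _)).symm
      rw [hsplit, hzero] at h1
      linarith
    have := le_of_tendsto halimp hev
    linarith
  -- integral estimates
  have hest_mono : ∀ p q : ℝ, p ≤ q → q ≤ c → (∫ u in p..q, ψ u) ≤ (β q - β p) * S := by
    intro p q hpq hqc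
    have h1 : (∫ u in p..q, ψ u) ≤ ∫ u in p..q, deriv β u * S := by
      apply intervalIntegral.integral_mono_on hpq
        (hψcont.intervalIntegrable _ _)
        (((hβ.continuous_deriv (by simp)).mul continuous_const).intervalIntegrable _ _)
      intro u hu
      have hd : 0 ≤ deriv β u := my_deriv_nonneg_of_monotoneOn (hβd u) hβmono
        (le_trans hu.2 hqc)
      exact mul_le_mul_of_nonneg_left (hle (γ u)) hd
    have h2 : (∫ u in p..q, deriv β u * S) = (β q - β p) * S := by
      rw [intervalIntegral.integral_mul_const]
      rw [intervalIntegral.integral_deriv_eq_sub (fun x _ => hβd x)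
        ((hβ.continuous_deriv (by simp)).intervalIntegrable _ _)]
    linarith
  have hest_anti : ∀ p q : ℝ, p ≤ q → c ≤ p → (∫ u in p..q, ψ u) ≤ (β q - β p) * I := by
    intro p q hpq hcp
    have h1 : (∫ u in p..q, ψ u) ≤ ∫ u in p..q, deriv β u * I := by
      apply intervalIntegral.integral_mono_on hpq
        (hψcont.intervalIntegrable _ _)
        (((hβ.continuous_deriv (by simp)).mul continuous_const).intervalIntegrable _ _)
      intro u hu
      have hd : deriv β u ≤ 0 := my_deriv_nonpos_of_antitoneOn (hβd u) hβanti
        (le_trans hcp hu.1)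
      exact mul_le_mul_of_nonpos_left (hge (γ u)) hd
    have h2 : (∫ u in p..q, deriv β u * I) = (β q - β p) * I := by
      rw [intervalIntegral.integral_mul_const]
      rw [intervalIntegral.integral_deriv_eq_sub (fun x _ => hβd x)
        ((hβ.continuous_deriv (by simp)).intervalIntegrable _ _)]
    linarith
  -- various numeric facts
  have hβt0 : β t0 = 0 := hβzero t0
    (by rw [abs_of_nonpos (by linarith [hcR1.1] : t0 ≤ 0)]; linarith)
  have hβt1 : β t1 = 0 := hβzero t1
    (by rw [abs_of_nonneg (by linarith [hcR1.2] : 0 ≤ t1)]; linarith)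
  have ht0c : t0 ≤ c := le_trans ht0R (by linarith [hcR1.1])
  have hct1 : c ≤ t1 := le_trans (by linarith [hcR1.2]) ht1R
  have hβs01 := hβ01 s
  have hβc01 := hβ01 c
  have hds : I ≤ h (γ s) - F (γ s) ∧ h (γ s) - F (γ s) ≤ S := ⟨hge (γ s), hle (γ s)⟩
  have haval : F (γ s) = a s - β s * (h (γ s) - F (γ s)) := by
    simp only [hadef]; ring
  -- Upper bound on a s
  have haUb : a s ≤ β (min s c) * S + (β s - β (min s c)) * I := by
    rcases le_total s c with hsc | hcs
    · rw [min_eq_left hsc]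
      have := hest_mono t0 s ht0s hsc
      rw [hβt0] at this
      have : a s ≤ (β s - 0) * S := le_trans haU this
      nlinarith [hβ01 s, hIS]
    · rw [min_eq_right hcs]
      have hsplit : (∫ u in t0..s, ψ u) = (∫ u in t0..c, ψ u) + ∫ u in c..s, ψ u :=
        (intervalIntegral.integral_add_adjacent_intervals
          (hψcont.intervalIntegrable _ _) (hψcont.intervalIntegrable _ _)).symm
      have h1 := hest_mono t0 c ht0c le_rfl
      have h2 := hest_anti c s hcs le_rfl
      rw [hβt0] at h1
      have h3 : (∫ u in t0..s, ψ u) ≤ (β c - 0) * S + (β s - β c) * I := by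
        rw [hsplit]; linarith
      have := le_trans haU h3
      linarith
  -- Lower bound on a s
  have haLb : β (max s c) * I - (β (max s c) - β s) * S ≤ a s := by
    rcases le_total c s with hcs | hsc
    · rw [max_eq_left hcs]
      have := hest_anti s t1 ht1s hcs
      rw [hβt1] at this
      have h2 : -(∫ u in s..t1, ψ u) ≥ -((0 - β s) * I) := by linarith
      have := le_trans (by linarith : β s * I ≤ -(∫ u in s..t1, ψ u)) haL
      linarith
    · rw [max_eq_right hsc]
      have hsplit : (∫ u in s..t1, ψ u) = (∫ u in s..c, ψ u) + ∫ u in c..t1, ψ u :=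
        (intervalIntegral.integral_add_adjacent_intervals
          (hψcont.intervalIntegrable _ _) (hψcont.intervalIntegrable _ _)).symm
      have h1 := hest_mono s c hsc le_rfl
      have h2 := hest_anti c t1 hct1 le_rfl
      rw [hβt1] at h2
      have h3 : (∫ u in s..t1, ψ u) ≤ (β c - β s) * S + (0 - β c) * I := by
        rw [hsplit]; linarith
      linarith
  -- conclude
  have hβm01 := hβ01 (min s c)
  have hβM01 := hβ01 (max s c)
  rw [abs_le]
  constructor
  · rw [haval]
    exact calc_lo S I (β s) (β (max s c)) (a s) (h (γ s) - F (γ s)) hIS hβs01.1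
      hβM01.1 hβM01.2 hds.2 haLb
  · rw [haval]
    exact calc_up S I (β s) (β (min s c)) (a s) (h (γ s) - F (γ s)) hIS hβs01.1
      hβm01.1 hβm01.2 hds.1 haUb
end

section
/- Let F : M → ℝ be smooth and suppose on an annular region A = U \ V (U, V open neighborhoods of a set Z with V̄ ⊂ U) the gradient satisfies 0 < d ≤ ‖∇F‖ ≤ D. Then there is δ > 0 such that every negative gradient flow segment γ : [a, b] → M with γ(a) ∈ ∂V and γ(b) ∈ ∂U and γ([a,b]) ⊆ Ā has energy ∫_a^b |γ'|² ≥ δ. Consequently, a finite-energy gradient flow line can cross the region A only finitely many times. -/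
/-- **Crossing an annular region costs a fixed amount of energy.**
If on the region `closure (U \ V)` (with `closure V ⊆ U`, frontiers at distance
`≥ ρ > 0`) the gradient satisfies `0 < d ≤ ‖∇F‖ ≤ D`, then there is `δ > 0`
such that every negative gradient flow segment crossing from `∂V` to `∂U`
inside `closure (U \ V)` has energy at least `δ`. -/
theorem annulus_crossing_energy
    {E : Type*} [NormedAddCommGroup E] [InnerProductSpace ℝ E] [CompleteSpace E]
    (F : E → ℝ) (hF : ContDiff ℝ (⊤ : ℕ∞) F)
    (U V : Set E) (hU : IsOpen U) (hV : IsOpen V) (hVU : closure V ⊆ U)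
    (ρ : ℝ) (hρ : 0 < ρ)
    (hsep : ∀ x ∈ frontier V, ∀ y ∈ frontier U, ρ ≤ dist x y)
    (d D : ℝ) (hd : 0 < d) (hdD : d ≤ D)
    (hgrad : ∀ x ∈ closure (U \ V), d ≤ ‖gradient F x‖ ∧ ‖gradient F x‖ ≤ D) :
    ∃ δ > 0, ∀ (γ : ℝ → E) (a b : ℝ), a ≤ b →
      (∀ s ∈ Set.Icc a b, HasDerivAt γ (-(gradient F (γ s))) s) →
      γ a ∈ frontier V → γ b ∈ frontier U →
      (∀ s ∈ Set.Icc a b, γ s ∈ closure (U \ V)) →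
      δ ≤ ∫ τ in a..b, ‖gradient F (γ τ)‖ ^ 2 := by
  refine ⟨d * ρ, mul_pos hd hρ, fun γ a b hab hderiv ha hb hmem => ?_⟩
  have hgc : Continuous (gradient F) := by
    have h1 : Continuous (fderiv ℝ F) := hF.continuous_fderiv (by simp)
    exact (InnerProductSpace.toDual ℝ E).symm.continuous.comp h1
  have hγc : ContinuousOn γ (Set.Icc a b) := fun s hs =>
    ((hderiv s hs).continuousAt).continuousWithinAt
  have huIcc : Set.uIcc a b = Set.Icc a b := Set.uIcc_of_le hab
  have hgγ : ContinuousOn (fun τ => gradient F (γ τ)) (Set.Icc a b) :=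
    hgc.comp_continuousOn hγc
  have hint1 : IntervalIntegrable (fun τ => ‖gradient F (γ τ)‖) MeasureTheory.volume a b := by
    apply ContinuousOn.intervalIntegrable
    rw [huIcc]; exact hgγ.norm
  have hint2 : IntervalIntegrable (fun τ => ‖gradient F (γ τ)‖ ^ 2) MeasureTheory.volume a b := by
    apply ContinuousOn.intervalIntegrable
    rw [huIcc]; exact hgγ.norm.pow 2
  -- FTC
  have hftc : ∫ τ in a..b, -(gradient F (γ τ)) = γ b - γ a := by
    apply intervalIntegral.integral_eq_sub_of_hasDerivAt
    · intro t ht; exact hderiv t (huIcc ▸ ht)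
    · apply ContinuousOn.intervalIntegrable
      rw [huIcc]; exact hgγ.neg
  have hρ' : ρ ≤ ∫ τ in a..b, ‖gradient F (γ τ)‖ := by
    calc ρ ≤ dist (γ a) (γ b) := hsep _ ha _ hb
    _ = ‖γ b - γ a‖ := by rw [dist_eq_norm, norm_sub_rev]
    _ = ‖∫ τ in a..b, -(gradient F (γ τ))‖ := by rw [hftc]
    _ ≤ ∫ τ in a..b, ‖-(gradient F (γ τ))‖ :=
        intervalIntegral.norm_integral_le_integral_norm hab
    _ = ∫ τ in a..b, ‖gradient F (γ τ)‖ := by simp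
  have hmono : ∫ τ in a..b, d * ‖gradient F (γ τ)‖ ≤ ∫ τ in a..b, ‖gradient F (γ τ)‖ ^ 2 := by
    apply intervalIntegral.integral_mono_on hab (hint1.const_mul d) hint2
    intro s hs
    have h1 := (hgrad _ (hmem s hs)).1
    calc d * ‖gradient F (γ s)‖ ≤ ‖gradient F (γ s)‖ * ‖gradient F (γ s)‖ :=
          mul_le_mul_of_nonneg_right h1 (norm_nonneg _)
    _ = ‖gradient F (γ s)‖ ^ 2 := (sq _).symm
  calc d * ρ ≤ d * ∫ τ in a..b, ‖gradient F (γ τ)‖ :=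
        mul_le_mul_of_nonneg_left hρ' hd.le
  _ = ∫ τ in a..b, d * ‖gradient F (γ τ)‖ := (intervalIntegral.integral_const_mul d _).symm
  _ ≤ _ := hmono
end

section
/- Let F : M → ℝ be smooth with compact critical set along which F = 0, and let γ be a negative gradient flow line of F defined near s₀ such that the action-energy estimate F(γ(s)) ≤ C·‖∇F(γ(s))‖² holds with F(γ(s)) ≥ 0 for s ≥ s₀, and γ(s_n) → z⁺ with F(z⁺) = 0 along some sequence s_n → ∞. Then for every s ≥ s₀, the length of γ on [s, ∞) is finite and bounded: ∫_s^∞ |γ'(t)| dt ≤ 2√C · √(F(γ(s))). -/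
open Real Filter MeasureTheory

/-- **Finite length of gradient flow lines converging to the critical set.**
If `γ` is a negative gradient flow line of `F` with `F ∘ γ ≥ 0` and the
action-energy estimate `F (γ s) ≤ C ‖∇F (γ s)‖²` for `s ≥ s₀`, the critical set
is compact with `F = 0` on it, and `γ (sₙ) → z⁺` for some `sₙ → ∞` with
`F z⁺ = 0`, then for every `s ≥ s₀` the length of `γ` on `[s, ∞)` is finite and
bounded by `2√C · √(F (γ s))`. -/
theorem gradient_flow_finite_length
    {E : Type*} [NormedAddCommGroup E] [InnerProductSpace ℝ E] [CompleteSpace E]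
    (F : E → ℝ) (hF : ContDiff ℝ (⊤ : ℕ∞) F)
    (hcrit : IsCompact {x : E | gradient F x = 0})
    (hcritval : ∀ x, gradient F x = 0 → F x = 0)
    (γ : ℝ → E) (hγ : ∀ s : ℝ, HasDerivAt γ (-(gradient F (γ s))) s)
    (C : ℝ) (hC : 0 < C) (s₀ : ℝ)
    (hpos : ∀ s ≥ s₀, 0 ≤ F (γ s))
    (hest : ∀ s ≥ s₀, F (γ s) ≤ C * ‖gradient F (γ s)‖ ^ 2)
    (zplus : E) (hFz : F zplus = 0)
    (sn : ℕ → ℝ) (hsn : Tendsto sn atTop atTop)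
    (hconv : Tendsto (fun n => γ (sn n)) atTop (nhds zplus)) :
    ∀ s ≥ s₀, IntegrableOn (fun t => ‖gradient F (γ t)‖) (Set.Ioi s) ∧
      ∫ t in Set.Ioi s, ‖gradient F (γ t)‖ ≤ 2 * sqrt C * sqrt (F (γ s)) := by
  have hγc : Continuous γ := continuous_iff_continuousAt.mpr fun t => (hγ t).continuousAt
  have hGc : Continuous (fun t : ℝ => ‖gradient F (γ t)‖) :=
    (((InnerProductSpace.toDual ℝ E).symm.continuous.comp
      (hF.continuous_fderiv (by simp))).comp hγc).norm
  -- the derivative of the value of `F` along the flow line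
  have hg' : ∀ t : ℝ, HasDerivAt (fun u => F (γ u)) (-‖gradient F (γ t)‖ ^ 2) t := by
    intro t
    have hd : DifferentiableAt ℝ F (γ t) := (hF.differentiable (by simp)).differentiableAt
    have h1 : HasDerivAt (fun u => F (γ u)) (fderiv ℝ F (γ t) (-(gradient F (γ t)))) t :=
      hd.hasFDerivAt.comp_hasDerivAt t (hγ t)
    convert h1 using 1
    have h2 : fderiv ℝ F (γ t) = InnerProductSpace.toDual ℝ E (gradient F (γ t)) := by
      simp [gradient]
    rw [h2, InnerProductSpace.toDual_apply_apply, inner_neg_right, real_inner_self_eq_norm_sq]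
  -- `F ∘ γ` is nonincreasing
  have hanti : Antitone (fun u => F (γ u)) := by
    refine antitone_of_deriv_nonpos (fun t => (hg' t).differentiableAt) fun t => ?_
    rw [(hg' t).deriv]
    simp [sq_nonneg]
  -- at points where the value vanishes, the gradient vanishes
  have hzero : ∀ t, s₀ ≤ t → F (γ t) = 0 → gradient F (γ t) = 0 := by
    intro t ht h0
    have hconst : ∀ u ∈ Set.Ici t, F (γ u) = F (γ t) := by
      intro u hu
      have h1 : F (γ u) ≤ F (γ t) := hanti hu
      have h2 : 0 ≤ F (γ u) := hpos u (le_trans ht hu)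
      rw [h0] at h1 ⊢
      linarith
    have hd1 : HasDerivWithinAt (fun u => F (γ u)) (-‖gradient F (γ t)‖ ^ 2) (Set.Ici t) t :=
      (hg' t).hasDerivWithinAt
    have hd2 : HasDerivWithinAt (fun u => F (γ u)) 0 (Set.Ici t) t :=
      (hasDerivWithinAt_const t _ (F (γ t))).congr hconst (hconst t (Set.mem_Ici.mpr le_rfl))
    have heq : -‖gradient F (γ t)‖ ^ 2 = 0 := by
      rw [← hd1.derivWithin (uniqueDiffOn_Ici t t (Set.mem_Ici.mpr le_rfl)),
        hd2.derivWithin (uniqueDiffOn_Ici t t (Set.mem_Ici.mpr le_rfl))]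
    have : ‖gradient F (γ t)‖ = 0 := by nlinarith [norm_nonneg (gradient F (γ t))]
    exact norm_eq_zero.mp this
  -- key interval estimate
  have key : ∀ a, s₀ ≤ a → ∀ b, a ≤ b →
      (∫ t in a..b, ‖gradient F (γ t)‖) ≤
        2 * sqrt C * sqrt (F (γ a)) - 2 * sqrt C * sqrt (F (γ b)) := by
    intro a ha b hab
    set f : ℝ → ℝ := fun t => 2 * sqrt C * sqrt (F (γ t)) +
      ∫ u in a..t, ‖gradient F (γ u)‖ with hf_def
    set f' : ℝ → ℝ := fun t => if F (γ t) = 0 then 0 else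
      ‖gradient F (γ t)‖ - sqrt C * ‖gradient F (γ t)‖ ^ 2 / sqrt (F (γ t)) with hf'_def
    have hfc : ContinuousOn f (Set.Icc a b) := by
      apply Continuous.continuousOn
      exact (continuous_const.mul (continuous_sqrt.comp (hF.continuous.comp hγc))).add
        (intervalIntegral.continuous_primitive (fun c d => hGc.intervalIntegrable c d) a)
    have hderiv : ∀ x ∈ Set.Ico a b, HasDerivWithinAt f (f' x) (Set.Ici x) x := by
      intro x hx
      have hxs₀ : s₀ ≤ x := le_trans ha hx.1
      by_cases h0 : F (γ x) = 0
      · -- `f` is constant on `Ici x`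
        have hgzero : ∀ u, x ≤ u → F (γ u) = 0 := by
          intro u hu
          have h1 : F (γ u) ≤ F (γ x) := hanti hu
          have h2 : 0 ≤ F (γ u) := hpos u (le_trans hxs₀ hu)
          linarith [h0 ▸ h1]
        have hconstf : ∀ u ∈ Set.Ici x, f u = f x := by
          intro u hu
          have hI : (∫ v in x..u, ‖gradient F (γ v)‖) = 0 := by
            rw [← intervalIntegral.integral_zero (a := x) (b := u) (E := ℝ)]
            apply intervalIntegral.integral_congr
            intro v hv
            rw [Set.uIcc_of_le hu] at hv
            have : gradient F (γ v) = 0 :=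
              hzero v (le_trans hxs₀ hv.1) (hgzero v hv.1)
            simp [this]
          have hsplit : (∫ v in a..u, ‖gradient F (γ v)‖) =
              (∫ v in a..x, ‖gradient F (γ v)‖) + ∫ v in x..u, ‖gradient F (γ v)‖ :=
            (intervalIntegral.integral_add_adjacent_intervals (hGc.intervalIntegrable a x)
              (hGc.intervalIntegrable x u)).symm
          simp only [hf_def, hgzero u hu, h0, hsplit, hI, add_zero]
        have : HasDerivWithinAt f 0 (Set.Ici x) x :=
          (hasDerivWithinAt_const x _ (f x)).congr hconstf (hconstf x (Set.mem_Ici.mpr le_rfl))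
        simpa [hf'_def, h0] using this
      · have hgx : 0 < F (γ x) := lt_of_le_of_ne (hpos x hxs₀) (Ne.symm h0)
        have hsq : HasDerivAt (fun t => sqrt (F (γ t)))
            (1 / (2 * sqrt (F (γ x))) * (-‖gradient F (γ x)‖ ^ 2)) x :=
          (Real.hasDerivAt_sqrt h0).comp x (hg' x)
        have hint : HasDerivAt (fun t => ∫ u in a..t, ‖gradient F (γ u)‖)
            (‖gradient F (γ x)‖) x :=
          intervalIntegral.integral_hasDerivAt_right (hGc.intervalIntegrable a x)
            hGc.aestronglyMeasurable.stronglyMeasurableAtFilter hGc.continuousAt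
        have hcomb := (hsq.const_mul (2 * sqrt C)).add hint
        have hval : 2 * sqrt C * (1 / (2 * sqrt (F (γ x))) * (-‖gradient F (γ x)‖ ^ 2)) +
            ‖gradient F (γ x)‖ = f' x := by
          rw [hf'_def]
          simp only [if_neg h0]
          have hsqrtne : sqrt (F (γ x)) ≠ 0 := ne_of_gt (Real.sqrt_pos.mpr hgx)
          field_simp
          ring
        rw [hval] at hcomb
        exact hcomb.hasDerivWithinAt
    have hbound : ∀ x ∈ Set.Ico a b, f' x ≤ 0 := by
      intro x hx
      have hxs₀ : s₀ ≤ x := le_trans ha hx.1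
      by_cases h0 : F (γ x) = 0
      · simp [hf'_def, h0]
      · have hgx : 0 < F (γ x) := lt_of_le_of_ne (hpos x hxs₀) (Ne.symm h0)
        have hsqrtpos : 0 < sqrt (F (γ x)) := Real.sqrt_pos.mpr hgx
        have hGnn : 0 ≤ ‖gradient F (γ x)‖ := norm_nonneg _
        have h1 : sqrt (F (γ x)) ≤ sqrt C * ‖gradient F (γ x)‖ := by
          calc sqrt (F (γ x)) ≤ sqrt (C * ‖gradient F (γ x)‖ ^ 2) :=
                Real.sqrt_le_sqrt (hest x hxs₀)
            _ = sqrt C * ‖gradient F (γ x)‖ := by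
                rw [Real.sqrt_mul hC.le, Real.sqrt_sq hGnn]
        have h2 : ‖gradient F (γ x)‖ * sqrt (F (γ x)) ≤ sqrt C * ‖gradient F (γ x)‖ ^ 2 := by
          nlinarith
        simp only [hf'_def, if_neg h0, sub_nonpos]
        rw [le_div_iff₀ hsqrtpos]
        linarith
    have hfin : f b ≤ f a := by
      have hB : ∀ x ∈ Set.Ico a b, HasDerivWithinAt (fun _ : ℝ => f a) ((fun _ : ℝ => (0:ℝ)) x) (Set.Ici x) x :=
        fun x _ => hasDerivWithinAt_const x _ (f a)
      exact image_le_of_deriv_right_le_deriv_boundary (B := fun _ => f a) (B' := fun _ => 0)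
        hfc hderiv le_rfl continuousOn_const hB hbound ⟨hab, le_rfl⟩
    rw [hf_def] at hfin
    simp only [intervalIntegral.integral_same, add_zero] at hfin
    linarith
  -- conclusion
  intro s hs
  have hbd : ∀ b, s ≤ b → (∫ t in s..b, ‖gradient F (γ t)‖) ≤ 2 * sqrt C * sqrt (F (γ s)) := by
    intro b hb
    have := key s hs b hb
    have h2 : 0 ≤ 2 * sqrt C * sqrt (F (γ b)) := by positivity
    linarith
  have hintOn : IntegrableOn (fun t => ‖gradient F (γ t)‖) (Set.Ioi s) := by
    refine integrableOn_Ioi_of_intervalIntegral_norm_bounded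
      (2 * sqrt C * sqrt (F (γ s))) s (fun i : ℝ => ?_) (tendsto_id (α := ℝ)) ?_
    · exact (hGc.integrableOn_Icc).mono_set Set.Ioc_subset_Icc_self
    · filter_upwards [eventually_ge_atTop s] with b hb
      simpa only [norm_norm, id] using hbd b hb
  refine ⟨hintOn, ?_⟩
  have hlim := intervalIntegral_tendsto_integral_Ioi s hintOn (tendsto_id (α := ℝ))
  exact le_of_tendsto hlim (by filter_upwards [eventually_ge_atTop s] with b hb using hbd b hb)
end
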